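/- Let V be a complex vector space and u, v ∈ V linearly independent over ℂ. Then for all real numbers a, b: (e(a) − e(b)) • u + (e(−a) − e(b)) • v = 0 if and only if either a and b are both integers, or a − 1/2 and b − 1/2 are both integers. (This computes the zero set of the Dirac eigenspinor ψ(x) = (e^{2πi(α+δ)(x)} − e^{2πi(α'+δ)(x)})φ⁺ + (e^{−2πi(α+δ)(x)} − e^{2πi(α'+δ)(x)})φ⁻ on a flat torus, showing it is a codimension-2 submanifold.) -/
import Mathlib


noncomputable section

open Real

/-- `e(a) := exp(2πia)`. -/
def e2πi (a : ℝ) : ℂ := Complex.exp (2 * Real.pi * Complex.I * a)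

lemma e2πi_eq_iff (x y : ℝ) : e2πi x = e2πi y ↔ ∃ n : ℤ, x = y + n := by
  unfold e2πi
  rw [Complex.exp_eq_exp_iff_exists_int]
  constructor
  · rintro ⟨n, hn⟩
    refine ⟨n, ?_⟩
    have h2 : (2 * (π:ℂ) * Complex.I) ≠ 0 := by
      simp [Real.pi_ne_zero, Complex.I_ne_zero]
    have : (2 * (π:ℂ) * Complex.I) * x = (2 * (π:ℂ) * Complex.I) * (y + n) := by
      rw [hn]; ring
    have := mul_left_cancel₀ h2 this
    exact_mod_cast this
  · rintro ⟨n, hn⟩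
    exact ⟨n, by rw [hn]; push_cast; ring⟩

/-- For `u, v` linearly independent over ℂ in a complex vector space and
`a, b ∈ ℝ`: `(e(a) − e(b)) • u + (e(−a) − e(b)) • v = 0` if and only if
either `a, b` are both integers, or `a − 1/2, b − 1/2` are both integers.
(This computes the zero set of a Dirac eigenspinor on a flat torus.) -/
theorem torus_eigenspinor_zero_set
    (V : Type*) [AddCommGroup V] [Module ℂ V]
    (u v : V) (huv : LinearIndependent ℂ ![u, v]) (a b : ℝ) :
    (e2πi a - e2πi b) • u + (e2πi (-a) - e2πi b) • v = 0 ↔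
      ((∃ p : ℤ, a = p) ∧ (∃ q : ℤ, b = q)) ∨
      ((∃ p : ℤ, a - 1/2 = p) ∧ (∃ q : ℤ, b - 1/2 = q)) := by
  constructor
  · intro h
    obtain ⟨h1, h2⟩ := (LinearIndependent.pair_iff.mp huv) _ _ h
    have hab : e2πi a = e2πi b := by linear_combination h1
    have hab' : e2πi (-a) = e2πi b := by linear_combination h2
    obtain ⟨n, hn⟩ := (e2πi_eq_iff a b).mp hab
    obtain ⟨m, hm⟩ := (e2πi_eq_iff a (-a)).mp (by rw [hab, ← hab'])
    -- 2a = m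
    have h2a : 2 * a = (m : ℝ) := by linarith
    rcases Int.even_or_odd m with ⟨p, hp⟩ | ⟨p, hp⟩
    · left
      refine ⟨⟨p, by push_cast [hp] at h2a ⊢; linarith⟩, ⟨p - n, ?_⟩⟩
      push_cast [hp] at h2a ⊢
      linarith
    · right
      refine ⟨⟨p, by push_cast [hp] at h2a ⊢; linarith⟩, ⟨p - n, ?_⟩⟩
      push_cast [hp] at h2a ⊢
      linarith
  · rintro (⟨⟨p, hp⟩, ⟨q, hq⟩⟩ | ⟨⟨p, hp⟩, ⟨q, hq⟩⟩)
    · have h1 : e2πi a = e2πi b := (e2πi_eq_iff a b).mpr ⟨p - q, by push_cast; linarith⟩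
      have h2 : e2πi (-a) = e2πi b := (e2πi_eq_iff (-a) b).mpr ⟨-p - q, by push_cast; linarith⟩
      rw [h1, h2]; simp
    · have h1 : e2πi a = e2πi b := (e2πi_eq_iff a b).mpr ⟨p - q, by push_cast; linarith⟩
      have h2 : e2πi (-a) = e2πi b := (e2πi_eq_iff (-a) b).mpr ⟨-p - q - 1, by push_cast; linarith⟩
      rw [h1, h2]; simp
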